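/- arXiv:1610.00022 — 8 statements merged into one kernel-verified Lean document; each statement's English description precedes it below -/
import Mathlib

section
/- Let Λ be a measurable space, μ a probability measure on Λ, 𝒩 a set of probability measures on Λ, and g : Λ → ℝ a measurable function with 0 ≤ g(λ) ≤ 1 for every λ ∈ Λ. If ∫ g dν = 1 for every ν ∈ 𝒩, then ϖ(𝒩|μ) ≤ ∫ g dμ. -/
/-!
Since `0 ≤ g ≤ 1` and `∫ g dν = 1`, the function `g` equals `1` almost everywhere for every
`ν ∈ 𝒩`, so `Ω = {g ≥ 1}` is admissible in the infimum defining `ϖ(𝒩|μ)`. Markov's inequality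
at level `1` then gives `μ Ω ≤ ∫ g dμ`.
-/

open MeasureTheory

/-- The asymmetric overlap `ϖ(𝒩|μ)`: the infimum of `μ Ω` over measurable sets `Ω`
that have full measure for every measure in `𝒩`. -/
noncomputable def asymmetricOverlap {Λ : Type*} [MeasurableSpace Λ]
    (N : Set (Measure Λ)) (μ : Measure Λ) : ℝ :=
  sInf { x : ℝ | ∃ Ω : Set Λ, MeasurableSet Ω ∧ (∀ ν ∈ N, ν Ω = 1) ∧ x = (μ Ω).toReal }

section

variable {Λ : Type*} [MeasurableSpace Λ]

theorem asymmetricOverlap_le_measureReal {N : Set (Measure Λ)} {μ : Measure Λ} {Ω : Set Λ}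
    (hΩ : MeasurableSet Ω) (hfull : ∀ ν ∈ N, ν Ω = 1) :
    asymmetricOverlap N μ ≤ μ.real Ω :=
  csInf_le ⟨0, fun _ ⟨_, _, _, hx⟩ => hx ▸ ENNReal.toReal_nonneg⟩ ⟨Ω, hΩ, hfull, rfl⟩

theorem integrable_of_nonneg_of_le_one {ν : Measure Λ} [IsFiniteMeasure ν] {g : Λ → ℝ}
    (hg : Measurable g) (hg0 : ∀ x, 0 ≤ g x) (hg1 : ∀ x, g x ≤ 1) : Integrable g ν :=
  .of_bound hg.aestronglyMeasurable 1 <| ae_of_all _ fun x => by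
    rw [Real.norm_of_nonneg (hg0 x)]
    exact hg1 x

theorem ae_eq_one_of_integral_eq_one {ν : Measure Λ} [IsProbabilityMeasure ν] {g : Λ → ℝ}
    (hgi : Integrable g ν) (hg1 : ∀ᵐ x ∂ν, g x ≤ 1) (h : ∫ x, g x ∂ν = 1) :
    ∀ᵐ x ∂ν, g x = 1 :=
  (integral_eq_iff_of_ae_le hgi (integrable_const 1) hg1).mp (by simp [h])

end

theorem overlap_le_born {Λ : Type*} [MeasurableSpace Λ]
    (μ : Measure Λ) [IsProbabilityMeasure μ]
    (N : Set (Measure Λ)) (hN : ∀ ν ∈ N, IsProbabilityMeasure ν)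
    (g : Λ → ℝ) (hg : Measurable g)
    (hg0 : ∀ x : Λ, 0 ≤ g x) (hg1 : ∀ x : Λ, g x ≤ 1)
    (hint : ∀ ν ∈ N, ∫ x, g x ∂ν = 1) :
    asymmetricOverlap N μ ≤ ∫ x, g x ∂μ := by
  have hΩ : MeasurableSet {x | 1 ≤ g x} := measurableSet_le measurable_const hg
  have hfull : ∀ ν ∈ N, ν {x | 1 ≤ g x} = 1 := fun ν hν => by
    have := hN ν hν
    have hg_ae := ae_eq_one_of_integral_eq_one (integrable_of_nonneg_of_le_one hg hg0 hg1)
      (ae_of_all _ hg1) (hint ν hν)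
    exact (mem_ae_iff_prob_eq_one hΩ).mp (hg_ae.mono fun x hx => hx.ge)
  calc asymmetricOverlap N μ ≤ μ.real {x | 1 ≤ g x} := asymmetricOverlap_le_measureReal hΩ hfull
    _ = 1 * μ.real {x | 1 ≤ g x} := (one_mul _).symm
    _ ≤ ∫ x, g x ∂μ :=
      mul_meas_ge_le_integral_of_nonneg (ae_of_all _ hg0)
        (integrable_of_nonneg_of_le_one hg hg0 hg1) 1
end

section
/- Let Λ be a measurable space, μ a probability measure on Λ, ι a finite index set, and for each i ∈ ι let 𝒩ᵢ be a set of probability measures on Λ. Then ϖ(⋃_{i ∈ ι} 𝒩ᵢ | μ) ≤ Σ_{i ∈ ι} ϖ(𝒩ᵢ | μ). -/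
open MeasureTheory

theorem overlap_union_le_sum {Λ : Type*} [MeasurableSpace Λ]
    (μ : Measure Λ) [IsProbabilityMeasure μ]
    {ι : Type*} [Fintype ι] (N : ι → Set (Measure Λ))
    (hN : ∀ i : ι, ∀ ν ∈ N i, IsProbabilityMeasure ν) :
    asymmetricOverlap (⋃ i : ι, N i) μ ≤ ∑ i : ι, asymmetricOverlap (N i) μ := by
  apply le_of_forall_pos_le_add
  intro ε hε
  set n : ℕ := Fintype.card ι with hn
  have hε' : (0:ℝ) < ε / (n+1) := by positivity
  have hch : ∀ i : ι, ∃ Ω : Set Λ, MeasurableSet Ω ∧ (∀ ν ∈ N i, ν Ω = 1) ∧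
      (μ Ω).toReal < asymmetricOverlap (N i) μ + ε/(n+1) := by
    intro i
    have hne : {x : ℝ | ∃ Ω : Set Λ, MeasurableSet Ω ∧ (∀ ν ∈ N i, ν Ω = 1) ∧
        x = (μ Ω).toReal}.Nonempty := by
      refine ⟨(μ Set.univ).toReal, Set.univ, MeasurableSet.univ, fun ν hν => ?_, rfl⟩
      haveI := hN i ν hν
      simp
    have hlt : asymmetricOverlap (N i) μ < asymmetricOverlap (N i) μ + ε/(n+1) :=
      lt_add_of_pos_right _ hε'
    obtain ⟨x, hxmem, hxlt⟩ := exists_lt_of_csInf_lt hne hlt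
    obtain ⟨Ω, hm, hfull, rfl⟩ := hxmem
    exact ⟨Ω, hm, hfull, hxlt⟩
  choose Ω hm hfull hlt using hch
  have hmu : MeasurableSet (⋃ i, Ω i) := MeasurableSet.iUnion hm
  have hfullu : ∀ ν ∈ ⋃ i, N i, ν (⋃ i, Ω i) = 1 := by
    intro ν hν
    obtain ⟨i, hi⟩ := Set.mem_iUnion.mp hν
    haveI := hN i ν hi
    have h1 : ν (Ω i) = 1 := hfull i ν hi
    have h2 : ν (Ω i) ≤ ν (⋃ i, Ω i) := measure_mono (Set.subset_iUnion Ω i)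
    exact le_antisymm prob_le_one (h1 ▸ h2)
  have hbdd : BddBelow {x : ℝ | ∃ Ω : Set Λ, MeasurableSet Ω ∧
      (∀ ν ∈ ⋃ i, N i, ν Ω = 1) ∧ x = (μ Ω).toReal} := by
    refine ⟨0, fun x hx => ?_⟩
    obtain ⟨Ω', _, _, rfl⟩ := hx
    exact ENNReal.toReal_nonneg
  have h1 : asymmetricOverlap (⋃ i, N i) μ ≤ (μ (⋃ i, Ω i)).toReal :=
    csInf_le hbdd ⟨⋃ i, Ω i, hmu, hfullu, rfl⟩
  have hfin : ∀ i : ι, μ (Ω i) ≠ ⊤ := fun i => (measure_lt_top μ _).ne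
  have h2 : (μ (⋃ i, Ω i)).toReal ≤ ∑ i, (μ (Ω i)).toReal := by
    have hle : μ (⋃ i, Ω i) ≤ ∑ i, μ (Ω i) := measure_iUnion_fintype_le μ Ω
    have hsum_fin : (∑ i, μ (Ω i)) ≠ ⊤ := by
      simpa [ENNReal.sum_eq_top] using hfin
    calc (μ (⋃ i, Ω i)).toReal ≤ (∑ i, μ (Ω i)).toReal := ENNReal.toReal_mono hsum_fin hle
      _ = ∑ i, (μ (Ω i)).toReal := ENNReal.toReal_sum (fun i _ => hfin i)
  have h3 : ∑ i, (μ (Ω i)).toReal ≤ ∑ i, (asymmetricOverlap (N i) μ + ε/(n+1)) :=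
    Finset.sum_le_sum (fun i _ => (hlt i).le)
  have h4 : ∑ i, (asymmetricOverlap (N i) μ + ε/(n+1))
      = (∑ i, asymmetricOverlap (N i) μ) + n * (ε/(n+1)) := by
    rw [Finset.sum_add_distrib]
    simp [hn, Finset.card_univ, mul_comm]
  have h5 : (n : ℝ) * (ε/(n+1)) ≤ ε := by
    rw [mul_div_assoc']
    rw [div_le_iff₀ (by positivity)]
    nlinarith [hε.le]
  linarith
end

section
/- Let Λ be a measurable space, γ a Markov kernel from Λ to Λ, μ a probability measure on Λ, and 𝒩 a set of probability measures on Λ. Then ϖ({ν.bind γ : ν ∈ 𝒩} | μ.bind γ) ≥ ϖ(𝒩 | μ), where μ.bind γ denotes the probability measure Ω ↦ ∫ γ(λ)(Ω) dμ(λ) obtained by composing μ with the kernel γ. -/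
/-!
If `Ω` has full measure under every `ν.bind γ`, the set `{λ | γ λ Ω = 1}` has full measure under
every `ν ∈ 𝒩` (a kernel integral equal to one forces its integrand to be one almost everywhere),
while by Markov's inequality its `μ`-measure is at most `(μ.bind γ) Ω`. So each set admissible for
`ϖ(γ𝒩 | γμ)` is matched by one admissible for `ϖ(𝒩 | μ)` of no larger measure.
-/

open MeasureTheory ProbabilityTheory

section Overlap

variable {Λ : Type*} [MeasurableSpace Λ] {N : Set (Measure Λ)} {μ : Measure Λ} {Ω : Set Λ}

theorem asymmetricOverlap_le (hΩ : MeasurableSet Ω) (hfull : ∀ ν ∈ N, ν Ω = 1) :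
    asymmetricOverlap N μ ≤ (μ Ω).toReal :=
  csInf_le ⟨0, by rintro _ ⟨_, _, _, rfl⟩; exact ENNReal.toReal_nonneg⟩ ⟨Ω, hΩ, hfull, rfl⟩

theorem le_asymmetricOverlap {c : ℝ} (hN : ∀ ν ∈ N, IsProbabilityMeasure ν)
    (h : ∀ Ω, MeasurableSet Ω → (∀ ν ∈ N, ν Ω = 1) → c ≤ (μ Ω).toReal) :
    c ≤ asymmetricOverlap N μ := by
  refine le_csInf ⟨_, .univ, .univ, fun ν hν => (hN ν hν).measure_univ, rfl⟩ ?_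
  rintro _ ⟨Ω, hΩ, hfull, rfl⟩
  exact h Ω hΩ hfull

end Overlap

namespace ProbabilityTheory.Kernel

variable {α β : Type*} [MeasurableSpace α] [MeasurableSpace β] (κ : Kernel α β) {s : Set β}

theorem measurableSet_setOf_apply_eq_one (hs : MeasurableSet s) :
    MeasurableSet {x | κ x s = 1} :=
  κ.measurable_coe hs (measurableSet_singleton 1)

theorem measure_setOf_apply_eq_one_of_comp_apply_eq_one [IsMarkovKernel κ] {ν : Measure α}
    [IsProbabilityMeasure ν] (hs : MeasurableSet s) (h : (κ ∘ₘ ν) s = 1) :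
    ν {x | κ x s = 1} = 1 := by
  have h_ae : ∀ᵐ x ∂ν, ∀ᵐ y ∂κ x, y ∈ s :=
    Measure.ae_ae_of_ae_comp ((mem_ae_iff_prob_eq_one hs).mpr h)
  rw [← mem_ae_iff_prob_eq_one (κ.measurableSet_setOf_apply_eq_one hs)]
  filter_upwards [h_ae] with x hx
  exact (mem_ae_iff_prob_eq_one hs).mp hx

theorem measure_setOf_apply_eq_one_le_comp_apply (μ : Measure α) (hs : MeasurableSet s) :
    μ {x | κ x s = 1} ≤ (κ ∘ₘ μ) s := by
  calc μ {x | κ x s = 1} ≤ μ {x | 1 ≤ κ x s} := measure_mono fun x hx => hx.ge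
    _ = 1 * μ {x | 1 ≤ κ x s} := (one_mul _).symm
    _ ≤ ∫⁻ x, κ x s ∂μ := mul_meas_ge_le_lintegral (κ.measurable_coe hs) 1
    _ = (κ ∘ₘ μ) s := (Measure.bind_apply hs κ.aemeasurable).symm

end ProbabilityTheory.Kernel

theorem overlap_mono_under_kernel {Λ : Type*} [MeasurableSpace Λ]
    (γ : Kernel Λ Λ) [IsMarkovKernel γ]
    (μ : Measure Λ) [IsProbabilityMeasure μ]
    (N : Set (Measure Λ)) (hN : ∀ ν ∈ N, IsProbabilityMeasure ν) :
    asymmetricOverlap ((fun ν : Measure Λ => ν.bind γ) '' N) (μ.bind γ)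
      ≥ asymmetricOverlap N μ := by
  have hN_bind : ∀ ν ∈ (fun ν : Measure Λ => ν.bind γ) '' N, IsProbabilityMeasure ν := by
    rintro _ ⟨ν, hν, rfl⟩
    have := hN ν hν
    infer_instance
  refine le_asymmetricOverlap hN_bind fun Ω hΩ hfull => ?_
  calc asymmetricOverlap N μ ≤ (μ {x | γ x Ω = 1}).toReal := by
        refine asymmetricOverlap_le (γ.measurableSet_setOf_apply_eq_one hΩ) fun ν hν => ?_
        have := hN ν hν
        exact γ.measure_setOf_apply_eq_one_of_comp_apply_eq_one hΩ (hfull _ ⟨ν, hν, rfl⟩)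
    _ ≤ ((μ.bind γ) Ω).toReal :=
        ENNReal.toReal_mono (measure_ne_top _ _) (γ.measure_setOf_apply_eq_one_le_comp_apply μ hΩ)
end

section
/- Let Λ be a measurable space, μ a probability measure on Λ, and 𝒩, 𝒳 two sets of probability measures on Λ. Let P₁, P₂, P₃ : Λ → ℝ be measurable functions with 0 ≤ Pⱼ(λ) and P₁(λ) + P₂(λ) + P₃(λ) = 1 for every λ ∈ Λ, and suppose ∫ P₁ dμ = 0, ∫ P₂ dν = 0 for every ν ∈ 𝒩, and ∫ P₃ dχ = 0 for every χ ∈ 𝒳. Then ϖ(𝒩 ∪ 𝒳 | μ) = ϖ(𝒩 | μ) + ϖ(𝒳 | μ). -/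
open MeasureTheory

lemma zero_set_full {Λ : Type*} [MeasurableSpace Λ] (ν : Measure Λ) [IsProbabilityMeasure ν]
    (f : Λ → ℝ) (hf : Measurable f) (h0 : ∀ x, 0 ≤ f x) (h1 : ∀ x, f x ≤ 1)
    (hint : ∫ x, f x ∂ν = 0) : ν {x | f x = 0} = 1 := by
  have hInt : Integrable f ν := by
    apply Integrable.mono' (integrable_const (1:ℝ)) hf.aestronglyMeasurable
    filter_upwards with x
    rw [Real.norm_eq_abs, abs_of_nonneg (h0 x)]
    exact h1 x
  have hae : f =ᵐ[ν] 0 :=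
    (integral_eq_zero_iff_of_nonneg (fun x => h0 x) hInt).mp hint
  have hmeas : MeasurableSet {x | f x = 0} := hf (measurableSet_singleton 0)
  rw [← prob_compl_eq_zero_iff hmeas]
  have : {x | f x = 0}ᶜ = {x | ¬ f x = 0} := rfl
  rw [this]
  exact hae

theorem antidistinguishability_overlap_additive {Λ : Type*} [MeasurableSpace Λ]
    (μ : Measure Λ) [IsProbabilityMeasure μ]
    (N X : Set (Measure Λ))
    (hN : ∀ ν ∈ N, IsProbabilityMeasure ν) (hX : ∀ χ ∈ X, IsProbabilityMeasure χ)
    (P₁ P₂ P₃ : Λ → ℝ)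
    (hm1 : Measurable P₁) (hm2 : Measurable P₂) (hm3 : Measurable P₃)
    (hpos : ∀ x : Λ, 0 ≤ P₁ x ∧ 0 ≤ P₂ x ∧ 0 ≤ P₃ x)
    (hsum : ∀ x : Λ, P₁ x + P₂ x + P₃ x = 1)
    (h1 : ∫ x, P₁ x ∂μ = 0)
    (h2 : ∀ ν ∈ N, ∫ x, P₂ x ∂ν = 0)
    (h3 : ∀ χ ∈ X, ∫ x, P₃ x ∂χ = 0) :
    asymmetricOverlap (N ∪ X) μ = asymmetricOverlap N μ + asymmetricOverlap X μ := by
  classical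
  set S₂ : Set Λ := {x | P₂ x = 0} with hS₂def
  set S₃ : Set Λ := {x | P₃ x = 0} with hS₃def
  have hmS₂ : MeasurableSet S₂ := hm2 (measurableSet_singleton 0)
  have hmS₃ : MeasurableSet S₃ := hm3 (measurableSet_singleton 0)
  -- upper bounds forced by the sum-to-one condition
  have hle1 : ∀ j : Fin 3, True := fun _ => trivial
  have hP1le : ∀ x, P₁ x ≤ 1 := fun x => by have := hpos x; have := hsum x; linarith [ (hpos x).1, (hpos x).2.1, (hpos x).2.2]
  have hP2le : ∀ x, P₂ x ≤ 1 := fun x => by have := hsum x; linarith [ (hpos x).1, (hpos x).2.1, (hpos x).2.2]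
  have hP3le : ∀ x, P₃ x ≤ 1 := fun x => by have := hsum x; linarith [ (hpos x).1, (hpos x).2.1, (hpos x).2.2]
  -- each ν ∈ N gives full measure to S₂, etc.
  have hνS₂ : ∀ ν ∈ N, ν S₂ = 1 := fun ν hν => by
    haveI := hN ν hν
    exact zero_set_full ν P₂ hm2 (fun x => (hpos x).2.1) hP2le (h2 ν hν)
  have hχS₃ : ∀ χ ∈ X, χ S₃ = 1 := fun χ hχ => by
    haveI := hX χ hχ
    exact zero_set_full χ P₃ hm3 (fun x => (hpos x).2.2) hP3le (h3 χ hχ)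
  -- μ gives null measure to S₂ ∩ S₃ (where P₁ = 1)
  have hμP1 : μ {x | P₁ x = 0} = 1 :=
    zero_set_full μ P₁ hm1 (fun x => (hpos x).1) hP1le h1
  have hμS23 : μ (S₂ ∩ S₃) = 0 := by
    have hsub : S₂ ∩ S₃ ⊆ {x | P₁ x = 0}ᶜ := by
      intro x hx
      have h2x : P₂ x = 0 := hx.1
      have h3x : P₃ x = 0 := hx.2
      have := hsum x
      simp only [Set.mem_compl_iff, Set.mem_setOf_eq]
      intro h
      rw [h, h2x, h3x] at this
      norm_num at this
    have : μ {x | P₁ x = 0}ᶜ = 0 :=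
      (prob_compl_eq_zero_iff (hm1 (measurableSet_singleton 0))).mpr hμP1
    exact measure_mono_null hsub this
  -- intersection of two full sets is full
  have inter_full : ∀ (ν : Measure Λ), IsProbabilityMeasure ν → ∀ A B : Set Λ,
      MeasurableSet A → MeasurableSet B → ν A = 1 → ν B = 1 → ν (A ∩ B) = 1 := by
    intro ν hνp A B hA hB hA1 hB1
    haveI := hνp
    rw [← prob_compl_eq_zero_iff (hA.inter hB)]
    have : (A ∩ B)ᶜ = Aᶜ ∪ Bᶜ := by rw [Set.compl_inter]
    rw [this]
    have hAc : ν Aᶜ = 0 := (prob_compl_eq_zero_iff hA).mpr hA1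
    have hBc : ν Bᶜ = 0 := (prob_compl_eq_zero_iff hB).mpr hB1
    exact measure_union_null hAc hBc
  -- the defining sets
  set SNX := { x : ℝ | ∃ Ω : Set Λ, MeasurableSet Ω ∧ (∀ ν ∈ N ∪ X, ν Ω = 1) ∧ x = (μ Ω).toReal }
  set SN := { x : ℝ | ∃ Ω : Set Λ, MeasurableSet Ω ∧ (∀ ν ∈ N, ν Ω = 1) ∧ x = (μ Ω).toReal }
  set SX := { x : ℝ | ∃ Ω : Set Λ, MeasurableSet Ω ∧ (∀ ν ∈ X, ν Ω = 1) ∧ x = (μ Ω).toReal }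
  have hne : ∀ (M : Set (Measure Λ)), (∀ ν ∈ M, IsProbabilityMeasure ν) →
      ((μ Set.univ).toReal) ∈ { x : ℝ | ∃ Ω : Set Λ, MeasurableSet Ω ∧ (∀ ν ∈ M, ν Ω = 1) ∧ x = (μ Ω).toReal } := by
    intro M hM
    exact ⟨Set.univ, MeasurableSet.univ, fun ν hν => by haveI := hM ν hν; simp, rfl⟩
  have hNXprob : ∀ ν ∈ N ∪ X, IsProbabilityMeasure ν := by
    rintro ν (hν | hν)
    exacts [hN ν hν, hX ν hν]
  have hneNX : SNX.Nonempty := ⟨_, hne _ hNXprob⟩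
  have hneN : SN.Nonempty := ⟨_, hne _ hN⟩
  have hneX : SX.Nonempty := ⟨_, hne _ hX⟩
  have hbdd : ∀ (S : Set ℝ), (∀ x ∈ S, (0:ℝ) ≤ x) → BddBelow S := by
    intro S hS
    exact ⟨0, fun x hx => hS x hx⟩
  have hbddNX : BddBelow SNX := hbdd _ (by rintro x ⟨Ω, _, _, rfl⟩; exact ENNReal.toReal_nonneg)
  have hbddN : BddBelow SN := hbdd _ (by rintro x ⟨Ω, _, _, rfl⟩; exact ENNReal.toReal_nonneg)
  have hbddX : BddBelow SX := hbdd _ (by rintro x ⟨Ω, _, _, rfl⟩; exact ENNReal.toReal_nonneg)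
  have hfin : ∀ Ω : Set Λ, μ Ω ≠ ⊤ := fun Ω => (measure_lt_top μ Ω).ne
  unfold asymmetricOverlap
  apply le_antisymm
  · -- sInf SNX ≤ sInf SN + sInf SX
    have key : ∀ a ∈ SN, ∀ b ∈ SX, sInf SNX ≤ a + b := by
      rintro a ⟨Ω, hΩm, hΩfull, rfl⟩ b ⟨Ω', hΩ'm, hΩ'full, rfl⟩
      have hmem : (μ (Ω ∪ Ω')).toReal ∈ SNX := by
        refine ⟨Ω ∪ Ω', hΩm.union hΩ'm, ?_, rfl⟩
        rintro ν (hν | hν)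
        · haveI := hN ν hν
          have hle : (1:ENNReal) ≤ ν (Ω ∪ Ω') := by
            rw [← hΩfull ν hν]; exact measure_mono Set.subset_union_left
          exact le_antisymm prob_le_one hle
        · haveI := hX ν hν
          have hle : (1:ENNReal) ≤ ν (Ω ∪ Ω') := by
            rw [← hΩ'full ν hν]; exact measure_mono Set.subset_union_right
          exact le_antisymm prob_le_one hle
      calc sInf SNX ≤ (μ (Ω ∪ Ω')).toReal := csInf_le hbddNX hmem
        _ ≤ ((μ Ω) + (μ Ω')).toReal := by
            apply ENNReal.toReal_mono
            · exact ENNReal.add_ne_top.mpr ⟨hfin Ω, hfin Ω'⟩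
            · exact measure_union_le Ω Ω'
        _ = (μ Ω).toReal + (μ Ω').toReal := ENNReal.toReal_add (hfin Ω) (hfin Ω')
    -- from key derive the inequality
    have h1' : ∀ b ∈ SX, sInf SNX - b ≤ sInf SN := by
      intro b hb
      apply le_csInf hneN
      intro a ha
      linarith [key a ha b hb]
    have h2' : sInf SNX - sInf SN ≤ sInf SX := by
      apply le_csInf hneX
      intro b hb
      linarith [h1' b hb]
    linarith
  · -- sInf SN + sInf SX ≤ sInf SNX
    apply le_csInf hneNX
    rintro c ⟨Ω, hΩm, hΩfull, rfl⟩
    have haN : (μ (Ω ∩ S₂)).toReal ∈ SN := by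
      refine ⟨Ω ∩ S₂, hΩm.inter hmS₂, ?_, rfl⟩
      intro ν hν
      exact inter_full ν (hN ν hν) Ω S₂ hΩm hmS₂ (hΩfull ν (Or.inl hν)) (hνS₂ ν hν)
    have haX : (μ (Ω ∩ S₃)).toReal ∈ SX := by
      refine ⟨Ω ∩ S₃, hΩm.inter hmS₃, ?_, rfl⟩
      intro χ hχ
      exact inter_full χ (hX χ hχ) Ω S₃ hΩm hmS₃ (hΩfull χ (Or.inr hχ)) (hχS₃ χ hχ)
    have hsumle : (μ (Ω ∩ S₂)).toReal + (μ (Ω ∩ S₃)).toReal ≤ (μ Ω).toReal := by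
      have hUI : μ (Ω ∩ S₂) + μ (Ω ∩ S₃) = μ ((Ω ∩ S₂) ∪ (Ω ∩ S₃)) + μ ((Ω ∩ S₂) ∩ (Ω ∩ S₃)) := by
        rw [measure_union_add_inter (Ω ∩ S₂) (hΩm.inter hmS₃)]
      have hint0 : μ ((Ω ∩ S₂) ∩ (Ω ∩ S₃)) = 0 := by
        apply measure_mono_null _ hμS23
        intro x hx
        exact ⟨hx.1.2, hx.2.2⟩
      have : μ (Ω ∩ S₂) + μ (Ω ∩ S₃) ≤ μ Ω := by
        rw [hUI, hint0, add_zero]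
        apply measure_mono
        rintro x (hx | hx)
        exacts [hx.1, hx.1]
      calc (μ (Ω ∩ S₂)).toReal + (μ (Ω ∩ S₃)).toReal
          = (μ (Ω ∩ S₂) + μ (Ω ∩ S₃)).toReal := (ENNReal.toReal_add (hfin _) (hfin _)).symm
        _ ≤ (μ Ω).toReal := ENNReal.toReal_mono (hfin Ω) this
    calc sInf SN + sInf SX ≤ (μ (Ω ∩ S₂)).toReal + (μ (Ω ∩ S₃)).toReal :=
          add_le_add (csInf_le hbddN haN) (csInf_le hbddX haX)
      _ ≤ (μ Ω).toReal := hsumle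
end

section
/- Let Λ be a measurable space, μ a probability measure on Λ, d a natural number, and for each i ∈ Fin d let 𝒩ᵢ be a set of probability measures on Λ and fᵢ : Λ → ℝ a measurable function with 0 ≤ fᵢ(λ) and Σ_{i} fᵢ(λ) = 1 for every λ ∈ Λ. Suppose ∫ fᵢ dν = 1 for every i ∈ Fin d and every ν ∈ 𝒩ᵢ, and suppose moreover (the ESMR/EMMR support condition) that every measurable Ω ⊆ Λ with ν(Ω) = 1 for every ν ∈ ⋃_i 𝒩ᵢ satisfies μ(Ω) = 1. Then ϖ(𝒩ᵢ | μ) = ∫ fᵢ dμ for every i ∈ Fin d. -/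
open MeasureTheory

/-! The sets `Sⱼ = {fⱼ = 1}` carry everything. Each preparation of `|j⟩` is concentrated on `Sⱼ`
(since `fⱼ ≤ 1` and `∫ fⱼ = 1`), and `fᵢ` vanishes on `Sⱼ` for `j ≠ i`. Hence `Sᵢ` is admissible
for `𝒩ᵢ`, giving `ϖ ≤ μ Sᵢ ≤ ∫ fᵢ dμ`. Conversely, if `Ω` is admissible for `𝒩ᵢ`, then
`Ω ∪ ⋃_{j ≠ i} Sⱼ` has full measure for every preparation of every eigenstate, so by the support
condition it is `μ`-conull; as `fᵢ ≤ 1` vanishes off `Ω` on that set, `∫ fᵢ dμ ≤ μ Ω`. -/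

theorem Fintype.eq_zero_of_sum_eq_apply {ι M : Type*} [Fintype ι]
    [AddCommMonoid M] [PartialOrder M] [IsOrderedCancelAddMonoid M]
    {a : ι → M} (ha : 0 ≤ a) {i j : ι} (hij : i ≠ j) (hj : ∑ k, a k = a j) : a i = 0 := by
  classical
  rw [← Finset.add_sum_erase _ _ (Finset.mem_univ j), add_eq_left,
    Finset.sum_eq_zero_iff_of_nonneg fun k _ => ha k] at hj
  exact hj i (Finset.mem_erase.2 ⟨hij, Finset.mem_univ i⟩)

theorem MeasureTheory.measure_preimage_one_eq_one_of_integral_eq_one {Λ : Type*}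
    [MeasurableSpace Λ] {ν : Measure Λ} [IsProbabilityMeasure ν] {g : Λ → ℝ} (hgm : Measurable g)
    (hg1 : g ≤ 1) (hint : ∫ x, g x ∂ν = 1) : ν (g ⁻¹' {1}) = 1 := by
  have hg_int : Integrable g ν := Integrable.of_integral_ne_zero (by simp [hint])
  have hae : g =ᵐ[ν] 1 :=
    (integral_eq_iff_of_ae_le hg_int (integrable_const 1) (ae_of_all _ hg1)).1 (by simp [hint])
  exact (mem_ae_iff_prob_eq_one (hgm (measurableSet_singleton 1))).1 hae

theorem MeasureTheory.measureReal_preimage_one_le_integral {Λ : Type*} [MeasurableSpace Λ]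
    {μ : Measure Λ} [IsFiniteMeasure μ] {g : Λ → ℝ} (hgm : AEStronglyMeasurable g μ)
    (hg0 : 0 ≤ g) (hg1 : g ≤ 1) : μ.real (g ⁻¹' {1}) ≤ ∫ x, g x ∂μ := by
  have hg : Integrable g μ := Integrable.of_bound hgm 1
    (ae_of_all _ fun x => by rw [Real.norm_of_nonneg (hg0 x)]; exact hg1 x)
  refine (measureReal_mono (s₂ := {x | 1 ≤ g x}) fun x (hx : g x = 1) => hx.ge).trans ?_
  simpa using mul_meas_ge_le_integral_of_nonneg (ae_of_all _ hg0) hg 1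

theorem MeasureTheory.integral_le_measureReal_of_ae_mem_union {Λ : Type*} [MeasurableSpace Λ]
    {μ : Measure Λ} [IsFiniteMeasure μ] {g : Λ → ℝ} {Ω U : Set Λ} (hΩ : MeasurableSet Ω)
    (hg0 : 0 ≤ g) (hg1 : g ≤ 1) (hgU : ∀ x ∈ U, g x = 0) (hΩU : ∀ᵐ x ∂μ, x ∈ Ω ∪ U) :
    ∫ x, g x ∂μ ≤ μ.real Ω := by
  have hle : g ≤ᵐ[μ] Ω.indicator 1 := by
    filter_upwards [hΩU] with x hx
    exact Set.le_indicator_apply (fun _ => hg1 x) fun hxΩ => (hgU x (hx.resolve_left hxΩ)).le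
  calc ∫ x, g x ∂μ ≤ ∫ x, Ω.indicator 1 x ∂μ :=
        integral_mono_of_nonneg (ae_of_all _ hg0) ((integrable_const 1).indicator hΩ) hle
    _ = μ.real Ω := integral_indicator_one hΩ

theorem asymmetricOverlap_eq_of_isLeast {Λ : Type*} [MeasurableSpace Λ]
    {N : Set (Measure Λ)} {μ : Measure Λ} {Ω₀ : Set Λ} (hΩ₀ : MeasurableSet Ω₀)
    (hNΩ₀ : ∀ ν ∈ N, ν Ω₀ = 1)
    (hle : ∀ Ω, MeasurableSet Ω → (∀ ν ∈ N, ν Ω = 1) → μ.real Ω₀ ≤ μ.real Ω) :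
    asymmetricOverlap N μ = μ.real Ω₀ :=
  IsLeast.csInf_eq ⟨⟨Ω₀, hΩ₀, hNΩ₀, rfl⟩, by rintro _ ⟨Ω, hΩ, hNΩ, rfl⟩; exact hle Ω hΩ hNΩ⟩

theorem esmr_overlap_saturates_born {Λ : Type*} [MeasurableSpace Λ]
    (μ : Measure Λ) [IsProbabilityMeasure μ]
    (d : ℕ) (N : Fin d → Set (Measure Λ))
    (hN : ∀ i : Fin d, ∀ ν ∈ N i, IsProbabilityMeasure ν)
    (f : Fin d → Λ → ℝ) (hfm : ∀ i : Fin d, Measurable (f i))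
    (hf0 : ∀ i : Fin d, ∀ x : Λ, 0 ≤ f i x)
    (hfsum : ∀ x : Λ, ∑ i : Fin d, f i x = 1)
    (hint : ∀ i : Fin d, ∀ ν ∈ N i, ∫ x, f i x ∂ν = 1)
    (hsupp : ∀ Ω : Set Λ, MeasurableSet Ω →
      (∀ ν ∈ ⋃ i : Fin d, N i, ν Ω = 1) → μ Ω = 1) :
    ∀ i : Fin d, asymmetricOverlap (N i) μ = ∫ x, f i x ∂μ := by
  intro i
  let S (j : Fin d) : Set Λ := f j ⁻¹' {1}
  have hSm (j : Fin d) : MeasurableSet (S j) := hfm j (measurableSet_singleton 1)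
  have hf1 (j : Fin d) (x : Λ) : f j x ≤ 1 :=
    (Finset.single_le_sum (fun k _ => hf0 k x) (Finset.mem_univ j)).trans_eq (hfsum x)
  have hνS (j : Fin d) (ν : Measure Λ) (hν : ν ∈ N j) : ν (S j) = 1 :=
    have := hN j ν hν
    measure_preimage_one_eq_one_of_integral_eq_one (hfm j) (hf1 j) (hint j ν hν)
  have hμΩ (Ω : Set Λ) (hΩ : MeasurableSet Ω) (hNΩ : ∀ ν ∈ N i, ν Ω = 1) :
      ∫ x, f i x ∂μ ≤ μ.real Ω := by
    let U := ⋃ (j) (_ : j ≠ i), S j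
    have hU : MeasurableSet U := .iUnion fun j => .iUnion fun _ => hSm j
    have hconull : μ (Ω ∪ U) = 1 := by
      refine hsupp _ (hΩ.union hU) fun ν hν => ?_
      obtain ⟨j, hνj⟩ := Set.mem_iUnion.1 hν
      have := hN j ν hνj
      refine one_le_prob_iff.1 ?_
      rcases eq_or_ne j i with rfl | hji
      · exact (hNΩ ν hνj).ge.trans (measure_mono Set.subset_union_left)
      · exact (hνS j ν hνj).ge.trans
          (measure_mono ((Set.subset_biUnion_of_mem (u := S) hji).trans Set.subset_union_right))
    refine integral_le_measureReal_of_ae_mem_union hΩ (hf0 i) (hf1 i) (fun x hx => ?_)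
      ((mem_ae_iff_prob_eq_one (hΩ.union hU)).2 hconull)
    obtain ⟨j, hji, hxj⟩ := Set.mem_iUnion₂.1 hx
    exact Fintype.eq_zero_of_sum_eq_apply (a := (f · x)) (fun k => hf0 k x) hji.symm
      ((hfsum x).trans hxj.symm)
  have hμS : μ.real (S i) ≤ ∫ x, f i x ∂μ :=
    measureReal_preimage_one_le_integral (hfm i).aestronglyMeasurable (hf0 i) (hf1 i)
  rw [asymmetricOverlap_eq_of_isLeast (hSm i) (hνS i) fun Ω hΩ hNΩ => hμS.trans (hμΩ Ω hΩ hNΩ)]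
  exact le_antisymm hμS (hμΩ _ (hSm i) (hνS i))
end

section
/- Let α be a real number with 0 < α < 1/√2, and work in H := EuclideanSpace ℂ (Fin 4) with standard orthonormal basis vectors e₀, e₁, e₂, e₃ (eᵢ := EuclideanSpace.single i 1). Set β := √2·α², τ := √(1 − α² − 2α⁴), δ := 1 − 2α², η := √2·α, κ := √(2α² − 4α⁴), and define ψ := α·e₀ + β·e₁ + τ·e₂ and φ := δ·e₀ + η·e₁ + κ·e₃. Then: (i) 1 − α² − 2α⁴ > 0 and 2α² − 4α⁴ > 0 (so τ and κ are positive); (ii) ‖ψ‖ = 1 and ‖φ‖ = 1; (iii) ⟪e₀, ψ⟫ = α and ⟪φ, ψ⟫ = α (inner product conjugate-linear in the first argument; all coefficients are real). -/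
open scoped InnerProductSpace

theorem state_construction (α : ℝ) (hα0 : 0 < α) (hα : α < 1 / Real.sqrt 2) :
    let e : Fin 4 → EuclideanSpace ℂ (Fin 4) := fun i => EuclideanSpace.single i 1
    let β : ℝ := Real.sqrt 2 * α ^ 2
    let τ : ℝ := Real.sqrt (1 - α ^ 2 - 2 * α ^ 4)
    let δ : ℝ := 1 - 2 * α ^ 2
    let η : ℝ := Real.sqrt 2 * α
    let κ : ℝ := Real.sqrt (2 * α ^ 2 - 4 * α ^ 4)
    let ψ : EuclideanSpace ℂ (Fin 4) := (α : ℂ) • e 0 + (β : ℂ) • e 1 + (τ : ℂ) • e 2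
    let φ : EuclideanSpace ℂ (Fin 4) := (δ : ℂ) • e 0 + (η : ℂ) • e 1 + (κ : ℂ) • e 3
    (0 < 1 - α ^ 2 - 2 * α ^ 4 ∧ 0 < 2 * α ^ 2 - 4 * α ^ 4) ∧
    (‖ψ‖ = 1 ∧ ‖φ‖ = 1) ∧
    (⟪e 0, ψ⟫_ℂ = (α : ℂ) ∧ ⟪φ, ψ⟫_ℂ = (α : ℂ)) := by
  intro e β τ δ η κ ψ φ
  have hα2 : α ^ 2 < 1 / 2 := by
    have h := mul_lt_mul'' hα hα hα0.le hα0.le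
    rw [div_mul_div_comm, Real.mul_self_sqrt (by norm_num)] at h
    nlinarith
  have hτ : (0:ℝ) < 1 - α ^ 2 - 2 * α ^ 4 := by nlinarith
  have hκ : (0:ℝ) < 2 * α ^ 2 - 4 * α ^ 4 := by nlinarith [pow_pos hα0 2]
  have hs2 : Real.sqrt 2 * Real.sqrt 2 = 2 := Real.mul_self_sqrt (by norm_num)
  have hτ2 : τ * τ = 1 - α ^ 2 - 2 * α ^ 4 := Real.mul_self_sqrt hτ.le
  have hκ2 : κ * κ = 2 * α ^ 2 - 4 * α ^ 4 := Real.mul_self_sqrt hκ.le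
  refine ⟨⟨hτ, hκ⟩, ⟨?_, ?_⟩, ?_, ?_⟩
  · have h1 : ⟪ψ, ψ⟫_ℂ = 1 := by
      have hr : α * α + β * β + τ * τ = 1 := by
        have hβ2 : β * β = 2 * α ^ 4 := by
          show (Real.sqrt 2 * α ^ 2) * (Real.sqrt 2 * α ^ 2) = 2 * α ^ 4
          rw [show (Real.sqrt 2 * α ^ 2) * (Real.sqrt 2 * α ^ 2)
              = (Real.sqrt 2 * Real.sqrt 2) * (α ^ 2 * α ^ 2) by ring, hs2]; ring
        linear_combination hτ2 + hβ2
      simp only [ψ, e, inner_add_left, inner_add_right, inner_smul_left, inner_smul_right,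
        EuclideanSpace.inner_single_left, EuclideanSpace.single_apply, Complex.conj_ofReal]
      norm_num [Fin.ext_iff, show ((3:Fin 4)) ≠ 0 from by decide, show ((3:Fin 4)) ≠ 1 from by decide, show ((3:Fin 4)) ≠ 2 from by decide, show ((0:Fin 4)) ≠ 3 from by decide, show ((1:Fin 4)) ≠ 3 from by decide, show ((2:Fin 4)) ≠ 3 from by decide]
      exact_mod_cast hr
    have h2 := inner_self_eq_norm_sq_to_K (𝕜 := ℂ) ψ
    rw [h1] at h2
    have h3 : ‖ψ‖ ^ 2 = 1 := by
      have h4 := h2.symm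
      rw [← RCLike.ofReal_pow, show (1:ℂ) = ((1:ℝ):ℂ) from by norm_num] at h4
      exact (RCLike.ofReal_inj (K:=ℂ)).mp h4
    nlinarith [norm_nonneg ψ]
  · have h1 : ⟪φ, φ⟫_ℂ = 1 := by
      have hr : δ * δ + η * η + κ * κ = 1 := by
        have hη2 : η * η = 2 * α ^ 2 := by
          show (Real.sqrt 2 * α) * (Real.sqrt 2 * α) = 2 * α ^ 2
          rw [show (Real.sqrt 2 * α) * (Real.sqrt 2 * α)
              = (Real.sqrt 2 * Real.sqrt 2) * (α * α) by ring, hs2]; ring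
        linear_combination hκ2 + hη2
      simp only [φ, e, inner_add_left, inner_add_right, inner_smul_left, inner_smul_right,
        EuclideanSpace.inner_single_left, EuclideanSpace.single_apply, Complex.conj_ofReal]
      norm_num [Fin.ext_iff, show ((3:Fin 4)) ≠ 0 from by decide, show ((3:Fin 4)) ≠ 1 from by decide, show ((3:Fin 4)) ≠ 2 from by decide, show ((0:Fin 4)) ≠ 3 from by decide, show ((1:Fin 4)) ≠ 3 from by decide, show ((2:Fin 4)) ≠ 3 from by decide]
      exact_mod_cast hr
    have h2 := inner_self_eq_norm_sq_to_K (𝕜 := ℂ) φ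
    rw [h1] at h2
    have h3 : ‖φ‖ ^ 2 = 1 := by
      have h4 := h2.symm
      rw [← RCLike.ofReal_pow, show (1:ℂ) = ((1:ℝ):ℂ) from by norm_num] at h4
      exact (RCLike.ofReal_inj (K:=ℂ)).mp h4
    nlinarith [norm_nonneg φ]
  · simp [ψ, e, inner_add_right, inner_smul_right, EuclideanSpace.inner_single_left,
      EuclideanSpace.single_apply]
  · have hr : δ * α + η * β = α := by
      have hηβ : η * β = 2 * α ^ 3 := by
        show (Real.sqrt 2 * α) * (Real.sqrt 2 * α ^ 2) = 2 * α ^ 3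
        rw [show (Real.sqrt 2 * α) * (Real.sqrt 2 * α ^ 2)
            = (Real.sqrt 2 * Real.sqrt 2) * (α * α ^ 2) by ring, hs2]; ring
      have : δ * α = α - 2 * α ^ 3 := by show (1 - 2*α^2) * α = _; ring
      rw [this, hηβ]; ring
    simp only [ψ, φ, e, inner_add_left, inner_add_right, inner_smul_left, inner_smul_right,
      EuclideanSpace.inner_single_left, EuclideanSpace.single_apply, Complex.conj_ofReal]
    norm_num [Fin.ext_iff, show ((3:Fin 4)) ≠ 0 from by decide, show ((3:Fin 4)) ≠ 1 from by decide, show ((3:Fin 4)) ≠ 2 from by decide, show ((0:Fin 4)) ≠ 3 from by decide, show ((1:Fin 4)) ≠ 3 from by decide, show ((2:Fin 4)) ≠ 3 from by decide]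
    exact_mod_cast (show α * δ + β * η = α by linear_combination hr)
end

section
/- Let α be a real number with 0 < α < 1/√2, and set a := α², b := α², c := (1 − 2α²)². Then a + b + c < 1 and (1 − a − b − c)² ≥ 4·a·b·c. -/
theorem antidistinguishability_inequalities (α : ℝ) (hα0 : 0 < α)
    (hα : α < 1 / Real.sqrt 2) :
    let a : ℝ := α ^ 2
    let b : ℝ := α ^ 2
    let c : ℝ := (1 - 2 * α ^ 2) ^ 2
    a + b + c < 1 ∧ (1 - a - b - c) ^ 2 ≥ 4 * a * b * c := by
  intro a b c
  have h2 : Real.sqrt 2 > 0 := by positivity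
  have hs : Real.sqrt 2 ^ 2 = 2 := Real.sq_sqrt (by norm_num)
  have ht : α ^ 2 < 1 / 2 := by
    have h := mul_self_lt_mul_self hα0.le hα
    rw [div_mul_div_comm, one_mul, Real.mul_self_sqrt (by norm_num : (2:ℝ) ≥ 0)] at h
    nlinarith [h]
  constructor
  · simp only [a, b, c]
    have htpos : 0 < α ^ 2 := by positivity
    nlinarith [mul_pos htpos (sub_pos.mpr ht)]
  · simp only [a, b, c]; nlinarith [sq_nonneg α]
end

section
/- Fix a natural number d ≥ 4 and let H := EuclideanSpace ℂ (Fin d) with standard orthonormal basis (b i)_{i ∈ Fin d}. There is no operational-eigenstate support macro-realist ontological model of the d-dimensional quantum system, in the following sense: there do not exist (a) a measurable space Λ; (b) for every unit vector ψ ∈ H a nonempty set Δ(ψ) of probability measures on Λ; (c) for every linear isometric equivalence U : H ≃ₗᵢ H a nonempty set Γ(U) of Markov kernels from Λ to Λ; (d) for every orthonormal basis e : Fin d → H a nonempty set Ξ(e) of families P : Fin d → Λ → ℝ of measurable functions satisfying 0 ≤ P i λ and Σ_{i} P i λ = 1 for all λ ∈ Λ; such that all three of the following hold: (Born rule) for every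 unit vector ψ, every μ ∈ Δ(ψ), every orthonormal basis e, every P ∈ Ξ(e) and every i ∈ Fin d, ∫ (P i) dμ = ‖⟪e i, ψ⟫‖²; (Closure under transformations) for every unit vector ψ, every μ ∈ Δ(ψ), every linear isometric equivalence U and every γ ∈ Γ(U), the probability measure μ.bind γ (i.e. Ω ↦ ∫ γ(λ)(Ω) dμ(λ)) belongs to Δ(U ψ); (ESMR/EMMR support condition) for every measurable Ω ⊆ Λ such that ν(Ω) = 1 for every ν ∈ ⋃_{i ∈ Fin d} Δ(b i), and for every unit vector ψ and every μ ∈ Δ(ψ), one has μ(Ω) = 1. -/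
/-!
Let `ψ = (b₀ + b₁ + b₂ + b₃) / 2` and let `μ` be a preparation of `ψ`. If `μ` gave measure zero
to some set carrying all preparations of `bᵢ`, for every `i`, the union of these sets would violate
ESMR; so `μ` overlaps the preparations of some `b_{i₀}`, necessarily with `i₀` among the first
four. The reflection in the line `ℂ ψ` fixes `ψ` and sends `b_{i₀}` to `χ = ψ - b_{i₀}`, so pushing
`μ` through a stochastic map realising it gives a preparation `μ'` of `ψ` that overlaps `χ`.

On the other hand, every eigenstate `bᵢ` is separated from `χ` inside `μ'`: there are sets
carrying all preparations of `bᵢ`, resp. of `χ`, that meet in a `μ'`-null set. For `i` outside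
the first four this is orthogonality of `bᵢ` and `ψ`; otherwise `bᵢ` and `χ` are antidistinguished
by two outcomes of a measurement whose probabilities under `ψ` add up to one. By ESMR the union of
the eigenstate sets is `μ'`-full, so the intersection of the `χ`-sets is `μ'`-null, contradicting
the overlap.
-/

open MeasureTheory ProbabilityTheory
open scoped InnerProductSpace

section Supports

variable {Λ ι : Type*} [MeasurableSpace Λ]

def IsFullFor (D : Set (Measure Λ)) (s : Set Λ) : Prop :=
  ∀ ν ∈ D, ∀ᵐ x ∂ν, x ∈ s

def Overlaps (μ : Measure Λ) (D : Set (Measure Λ)) : Prop :=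
  ∀ s, MeasurableSet s → IsFullFor D s → μ s ≠ 0

def Separates (μ : Measure Λ) (D D' : Set (Measure Λ)) : Prop :=
  ∃ s t, MeasurableSet s ∧ MeasurableSet t ∧ IsFullFor D s ∧ IsFullFor D' t ∧ μ (s ∩ t) = 0

lemma isFullFor_iInter [Countable ι] {D : Set (Measure Λ)} {s : ι → Set Λ}
    (h : ∀ i, IsFullFor D (s i)) : IsFullFor D (⋂ i, s i) := fun ν hν => by
  simpa only [Set.mem_iInter, ae_all_iff] using fun i => h i ν hν

lemma separates_of_measure_eq_zero {μ : Measure Λ} {D : Set (Measure Λ)} {s : Set Λ}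
    (hs : MeasurableSet s) (hD : IsFullFor D s) (hμ : μ s = 0) (D' : Set (Measure Λ)) :
    Separates μ D D' :=
  ⟨s, Set.univ, hs, .univ, hD, fun _ _ => ae_of_all _ Set.mem_univ, by rwa [Set.inter_univ]⟩

lemma Overlaps.bind {μ : Measure Λ} {D D' : Set (Measure Λ)} {γ : Kernel Λ Λ}
    [IsMarkovKernel γ] (h : Overlaps μ D) (hD : ∀ ν ∈ D, ν.bind γ ∈ D') :
    Overlaps (μ.bind γ) D' := by
  intro t ht hD' hμt
  refine h _ (γ.measurable_coe ht (measurableSet_singleton 1)) (fun ν hν => ?_)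
    (measure_eq_zero_iff_ae_notMem.2 ?_)
  · filter_upwards [Measure.ae_ae_of_ae_bind γ.aemeasurable (hD' _ (hD ν hν))] with x hx
    exact (mem_ae_iff_prob_eq_one ht).1 hx
  · filter_upwards [Measure.ae_ae_of_ae_bind γ.aemeasurable
      (measure_eq_zero_iff_ae_notMem.1 hμt)] with x hx hxt
    exact one_ne_zero (hxt.symm.trans (measure_eq_zero_iff_ae_notMem.2 hx))

end Supports

section ResponseFamily

variable {Λ ι : Type*} [MeasurableSpace Λ] [Fintype ι]

structure IsResponseFamily (P : ι → Λ → ℝ) : Prop where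
  measurable : ∀ i, Measurable (P i)
  nonneg : ∀ i x, 0 ≤ P i x
  sum_eq_one : ∀ x, ∑ i, P i x = 1

namespace IsResponseFamily

variable {P : ι → Λ → ℝ}

lemma sum_le_one (hP : IsResponseFamily P) (s : Finset ι) (x : Λ) : ∑ i ∈ s, P i x ≤ 1 :=
  hP.sum_eq_one x ▸ Finset.sum_le_sum_of_subset_of_nonneg (Finset.subset_univ s)
    fun i _ _ => hP.nonneg i x

lemma integrable (hP : IsResponseFamily P) (μ : Measure Λ) [IsFiniteMeasure μ] (i : ι) :
    Integrable (P i) μ :=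
  .of_mem_Icc 0 1 (hP.measurable i).aemeasurable <| ae_of_all _ fun x =>
    ⟨hP.nonneg i x, by simpa using hP.sum_le_one {i} x⟩

lemma ae_eq_zero_of_integral_eq_zero (hP : IsResponseFamily P) {μ : Measure Λ}
    [IsFiniteMeasure μ] {i : ι} (h : ∫ x, P i x ∂μ = 0) : ∀ᵐ x ∂μ, P i x = 0 :=
  (integral_eq_zero_iff_of_nonneg (hP.nonneg i) (hP.integrable μ i)).1 h

lemma ae_sum_eq_one_of_sum_integral_eq_one (hP : IsResponseFamily P) {μ : Measure Λ}
    [IsProbabilityMeasure μ] {s : Finset ι} (h : ∑ i ∈ s, ∫ x, P i x ∂μ = 1) :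
    ∀ᵐ x ∂μ, ∑ i ∈ s, P i x = 1 := by
  have hint : Integrable (fun x => ∑ i ∈ s, P i x) μ :=
    integrable_finsetSum s fun i _ => hP.integrable μ i
  have hzero : ∫ x, (1 - ∑ i ∈ s, P i x) ∂μ = 0 := by
    rw [integral_sub (integrable_const 1) hint, integral_finsetSum s fun i _ => hP.integrable μ i,
      h, integral_const, probReal_univ, one_smul, sub_self]
  filter_upwards [(integral_eq_zero_iff_of_nonneg (fun x => sub_nonneg.2 (hP.sum_le_one s x))
    ((integrable_const 1).sub hint)).1 hzero] with x hx
  exact (sub_eq_zero.1 hx).symm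

end IsResponseFamily

end ResponseFamily

section Orthonormal

variable {ι 𝕜 E : Type*} [Fintype ι] [RCLike 𝕜] [NormedAddCommGroup E] [InnerProductSpace 𝕜 E]
  [FiniteDimensional 𝕜 E]

lemma exists_orthonormalBasis_apply_eq_pair (hι : Module.finrank 𝕜 E = Fintype.card ι)
    {k₀ k₁ : ι} (hk : k₀ ≠ k₁) {v₀ v₁ : E} (h₀₀ : ⟪v₀, v₀⟫_𝕜 = 1) (h₁₁ : ⟪v₁, v₁⟫_𝕜 = 1)
    (h₀₁ : ⟪v₀, v₁⟫_𝕜 = 0) : ∃ B : OrthonormalBasis ι 𝕜 E, B k₀ = v₀ ∧ B k₁ = v₁ := by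
  classical
  have h₁₀ : ⟪v₁, v₀⟫_𝕜 = 0 := by rw [← inner_conj_symm, h₀₁, map_zero]
  set v : ι → E := fun k => if k = k₀ then v₀ else v₁
  have hv : Orthonormal 𝕜 (({k₀, k₁} : Set ι).domRestrict v) := by
    rw [orthonormal_iff_ite]
    rintro ⟨i, hi⟩ ⟨j, hj⟩
    simp only [Set.mem_insert_iff, Set.mem_singleton_iff] at hi hj
    rcases hi with rfl | rfl <;> rcases hj with rfl | rfl <;>
      simp only [Set.domRestrict_apply, Subtype.mk.injEq, v, if_pos, hk, hk.symm, h₀₀, h₁₁,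
        h₀₁, h₁₀, if_false]
  obtain ⟨B, hB⟩ := hv.exists_orthonormalBasis_extension_of_card_eq hι
  exact ⟨B, by simpa [v] using hB k₀ (by simp), by simpa [v, hk.symm] using hB k₁ (by simp)⟩

end Orthonormal

section StateVectors

variable {ι H : Type*} [NormedAddCommGroup H] [InnerProductSpace ℂ H]

lemma reflection_span_singleton_eq_sub {ψ u : H} (hψ : ‖ψ‖ = 1) (h : ⟪u, ψ⟫_ℂ = 2⁻¹) :
    (ℂ ∙ ψ).reflection u = ψ - u := by
  rw [Submodule.reflection_apply, Submodule.starProjection_unit_singleton ℂ hψ, ← inner_conj_symm,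
    h, map_inv₀, map_ofNat]
  module

lemma exists_uniform_superposition [Fintype ι] (b : OrthonormalBasis ι ℂ H) {s : Finset ι}
    (hs : s.card = 4) :
    ∃ ψ : H, ‖ψ‖ = 1 ∧ (∀ i ∈ s, ⟪b i, ψ⟫_ℂ = 2⁻¹) ∧ ∀ i ∉ s, ⟪b i, ψ⟫_ℂ = 0 := by
  classical
  set ψ : H := (2⁻¹ : ℂ) • ∑ k ∈ s, b k
  have hinner : ∀ i, ⟪b i, ψ⟫_ℂ = if i ∈ s then 2⁻¹ else 0 := fun i => by
    simp [ψ, orthonormal_iff_ite.1 b.orthonormal]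
  have hsq : ‖ψ‖ ^ 2 = 1 := by
    rw [← b.sum_sq_norm_inner_right,
      ← Finset.sum_subset (Finset.subset_univ s) fun i _ hi => by simp [hinner, hi],
      Finset.sum_congr rfl fun i hi => by rw [hinner, if_pos hi], Finset.sum_const, hs]
    norm_num
  exact ⟨ψ, (pow_eq_one_iff_of_nonneg (norm_nonneg ψ) two_ne_zero).1 hsq,
    fun i hi => by simp [hinner, hi], fun i hi => by simp [hinner, hi]⟩

lemma exists_orthonormalBasis_antidistinguishing [Fintype ι] [FiniteDimensional ℂ H]
    (hι : Module.finrank ℂ H = Fintype.card ι) {k₀ k₁ : ι} (hk : k₀ ≠ k₁) {u w ψ : H}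
    (hu : ‖u‖ = 1) (hw : ‖w‖ = 1) (hψ : ‖ψ‖ = 1) (huw : ⟪u, w⟫_ℂ = 0)
    (huψ : ⟪u, ψ⟫_ℂ = 2⁻¹) (hwψ : ⟪w, ψ⟫_ℂ = 2⁻¹) :
    ∃ B : OrthonormalBasis ι ℂ H, ⟪B k₀, u⟫_ℂ = 0 ∧ ⟪B k₀, w⟫_ℂ = 0 ∧ ⟪B k₁, ψ - u⟫_ℂ = 0 ∧
      ‖⟪B k₀, ψ⟫_ℂ‖ ^ 2 + ‖⟪B k₁, ψ⟫_ℂ‖ ^ 2 = 1 := by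
  set c : ℂ := (((√2)⁻¹ : ℝ) : ℂ)
  have hc : (starRingEnd ℂ) c = c := Complex.conj_ofReal _
  have hc2 : c * c = 2⁻¹ := by
    rw [← Complex.ofReal_mul, ← mul_inv, Real.mul_self_sqrt zero_le_two]; push_cast; rfl
  have hwu : ⟪w, u⟫_ℂ = 0 := by rw [← inner_conj_symm, huw, map_zero]
  have hψu : ⟪ψ, u⟫_ℂ = 2⁻¹ := by rw [← inner_conj_symm, huψ, map_inv₀, map_ofNat]
  have hψw : ⟪ψ, w⟫_ℂ = 2⁻¹ := by rw [← inner_conj_symm, hwψ, map_inv₀, map_ofNat]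
  have huu : ⟪u, u⟫_ℂ = 1 := by rw [inner_self_eq_norm_sq_to_K, hu]; norm_num
  have hww : ⟪w, w⟫_ℂ = 1 := by rw [inner_self_eq_norm_sq_to_K, hw]; norm_num
  have hψψ : ⟪ψ, ψ⟫_ℂ = 1 := by rw [inner_self_eq_norm_sq_to_K, hψ]; norm_num
  have hcc : ∀ x y : H, ⟪c • x, c • y⟫_ℂ = 2⁻¹ * ⟪x, y⟫_ℂ := fun x y => by
    rw [inner_smul_left, inner_smul_right, hc, ← mul_assoc, hc2]
  have hc_left : ∀ x y : H, ⟪c • x, y⟫_ℂ = c * ⟪x, y⟫_ℂ := fun x y => by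
    rw [inner_smul_left, hc]
  -- `ψ = c • (v₀ + v₁)` with `c = 1 / √2`, `v₁ ∈ span {u, w}` and `v₀ ⊥ u, w`
  set v₀ : H := c • ((2 : ℂ) • ψ - u - w)
  set v₁ : H := c • (u + w)
  have h₀₀ : ⟪v₀, v₀⟫_ℂ = 1 := by
    simp only [v₀, hcc, inner_sub_left, inner_sub_right, inner_smul_left, inner_smul_right,
      huu, hww, hψψ, huw, hwu, huψ, hwψ, hψu, hψw, map_ofNat]
    norm_num
  have h₁₁ : ⟪v₁, v₁⟫_ℂ = 1 := by
    simp only [v₁, hcc, inner_add_left, inner_add_right, huu, hww, huw, hwu]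
    norm_num
  have h₀₁ : ⟪v₀, v₁⟫_ℂ = 0 := by
    simp only [v₀, v₁, hcc, inner_sub_left, inner_add_right, inner_smul_left,
      huu, hww, huw, hwu, hψu, hψw, map_ofNat]
    norm_num
  obtain ⟨B, hB₀, hB₁⟩ := exists_orthonormalBasis_apply_eq_pair hι hk h₀₀ h₁₁ h₀₁
  refine ⟨B, ?_, ?_, ?_, ?_⟩ <;> simp only [hB₀, hB₁, v₀, v₁, hc_left]
  · simp only [inner_sub_left, inner_smul_left, huu, hwu, hψu, map_ofNat]
    norm_num
  · simp only [inner_sub_left, inner_smul_left, hww, huw, hψw, map_ofNat]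
    norm_num
  · simp only [inner_add_left, inner_sub_right, huu, hwu, huψ, hwψ]
    norm_num
  · simp only [inner_sub_left, inner_add_left, inner_smul_left, hψψ, huψ, hwψ, map_ofNat]
    norm_num
    rw [← two_mul, sq, ← norm_mul, hc2]
    norm_num

end StateVectors

/-- `prep ψ`, `trans U` and `resp e` are the paper's `Δ(ψ)`, `Γ(U)` and `Ξ(e)`. -/
structure OntologicalModel (ι H Λ : Type*) [Fintype ι] [NormedAddCommGroup H]
    [InnerProductSpace ℂ H] [MeasurableSpace Λ] where
  prep : H → Set (Measure Λ)
  trans : (H ≃ₗᵢ[ℂ] H) → Set (Kernel Λ Λ)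
  resp : OrthonormalBasis ι ℂ H → Set (ι → Λ → ℝ)
  prep_nonempty : ∀ ψ : H, ‖ψ‖ = 1 → (prep ψ).Nonempty
  isProbabilityMeasure_of_mem_prep : ∀ ψ : H, ‖ψ‖ = 1 → ∀ μ ∈ prep ψ, IsProbabilityMeasure μ
  trans_nonempty : ∀ U, (trans U).Nonempty
  isMarkovKernel_of_mem_trans : ∀ U, ∀ γ ∈ trans U, IsMarkovKernel γ
  resp_nonempty : ∀ e, (resp e).Nonempty
  isResponseFamily_of_mem_resp : ∀ e, ∀ P ∈ resp e, IsResponseFamily P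
  born : ∀ ψ : H, ‖ψ‖ = 1 → ∀ μ ∈ prep ψ, ∀ e, ∀ P ∈ resp e, ∀ i,
    ∫ x, P i x ∂μ = ‖⟪e i, ψ⟫_ℂ‖ ^ 2
  bind_mem_prep : ∀ ψ : H, ‖ψ‖ = 1 → ∀ μ ∈ prep ψ, ∀ U, ∀ γ ∈ trans U, μ.bind γ ∈ prep (U ψ)

namespace OntologicalModel

variable {ι H Λ : Type*} [Fintype ι] [NormedAddCommGroup H] [InnerProductSpace ℂ H]
  [MeasurableSpace Λ] (M : OntologicalModel ι H Λ)

def IsESMR (b : OrthonormalBasis ι ℂ H) : Prop :=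
  ∀ Ω : Set Λ, MeasurableSet Ω → (∀ ν ∈ ⋃ i, M.prep (b i), ν Ω = 1) →
    ∀ ψ : H, ‖ψ‖ = 1 → ∀ μ ∈ M.prep ψ, μ Ω = 1

variable {M} {φ ψ : H} {μ ν : Measure Λ} {e b : OrthonormalBasis ι ℂ H} {P : ι → Λ → ℝ}

lemma ae_resp_eq_zero (hφ : ‖φ‖ = 1) (hν : ν ∈ M.prep φ) (hP : P ∈ M.resp e) {k : ι}
    (h : ⟪e k, φ⟫_ℂ = 0) : ∀ᵐ x ∂ν, P k x = 0 := by
  have := M.isProbabilityMeasure_of_mem_prep φ hφ ν hν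
  refine (M.isResponseFamily_of_mem_resp e P hP).ae_eq_zero_of_integral_eq_zero ?_
  rw [M.born φ hφ ν hν e P hP k, h, norm_zero, sq, mul_zero]

lemma ae_sum_resp_eq_one (hφ : ‖φ‖ = 1) (hν : ν ∈ M.prep φ) (hP : P ∈ M.resp e)
    {s : Finset ι} (h : ∑ k ∈ s, ‖⟪e k, φ⟫_ℂ‖ ^ 2 = 1) : ∀ᵐ x ∂ν, ∑ k ∈ s, P k x = 1 := by
  have := M.isProbabilityMeasure_of_mem_prep φ hφ ν hν
  refine (M.isResponseFamily_of_mem_resp e P hP).ae_sum_eq_one_of_sum_integral_eq_one ?_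
  simpa only [M.born φ hφ ν hν e P hP] using h

lemma exists_isFullFor_measure_eq_zero_of_inner_eq_zero (hψ : ‖ψ‖ = 1) (hμ : μ ∈ M.prep ψ)
    {k : ι} (h : ⟪e k, ψ⟫_ℂ = 0) :
    ∃ s, MeasurableSet s ∧ IsFullFor (M.prep (e k)) s ∧ μ s = 0 := by
  obtain ⟨P, hP⟩ := M.resp_nonempty e
  refine ⟨{x | P k x = 1}, (M.isResponseFamily_of_mem_resp e P hP).measurable k
    (measurableSet_singleton 1), fun ν hν => ?_, ?_⟩
  · simpa using M.ae_sum_resp_eq_one (e.orthonormal.1 k) hν hP (s := {k})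
      (by simp [inner_self_eq_norm_sq_to_K, e.orthonormal.1 k])
  · refine measure_eq_zero_iff_ae_notMem.2 ((M.ae_resp_eq_zero hψ hμ hP h).mono fun x hx => ?_)
    simp [hx]

lemma separates_of_antidistinguishing {χ : H} {k₀ k₁ : ι} (hk : k₀ ≠ k₁) (hφ : ‖φ‖ = 1)
    (hχ : ‖χ‖ = 1) (hψ : ‖ψ‖ = 1) (hμ : μ ∈ M.prep ψ) (hφ₀ : ⟪e k₀, φ⟫_ℂ = 0)
    (hχ₁ : ⟪e k₁, χ⟫_ℂ = 0) (hψ₀₁ : ‖⟪e k₀, ψ⟫_ℂ‖ ^ 2 + ‖⟪e k₁, ψ⟫_ℂ‖ ^ 2 = 1) :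
    Separates μ (M.prep φ) (M.prep χ) := by
  classical
  obtain ⟨P, hP⟩ := M.resp_nonempty e
  have hPm := (M.isResponseFamily_of_mem_resp e P hP).measurable
  refine ⟨{x | P k₀ x = 0}, {x | P k₁ x = 0}, hPm k₀ (measurableSet_singleton 0),
    hPm k₁ (measurableSet_singleton 0), fun ν hν => M.ae_resp_eq_zero hφ hν hP hφ₀,
    fun ν hν => M.ae_resp_eq_zero hχ hν hP hχ₁, measure_eq_zero_iff_ae_notMem.2 ?_⟩
  filter_upwards [M.ae_sum_resp_eq_one hψ hμ hP (s := {k₀, k₁}) (by rwa [Finset.sum_pair hk])]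
    with x hx ⟨h₀, h₁⟩
  rw [Finset.sum_pair hk, h₀, h₁, add_zero] at hx
  exact zero_ne_one hx

namespace IsESMR

lemma measure_eq_zero (hM : M.IsESMR b) (hψ : ‖ψ‖ = 1) (hμ : μ ∈ M.prep ψ)
    {A : ι → Set Λ} (hA : ∀ i, MeasurableSet (A i)) (hAb : ∀ i, IsFullFor (M.prep (b i)) (A i))
    {F : Set Λ} (hF : ∀ i, μ (A i ∩ F) = 0) : μ F = 0 := by
  have := M.isProbabilityMeasure_of_mem_prep ψ hψ μ hμ
  have hΩ : μ (⋃ i, A i) = 1 := by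
    refine hM _ (.iUnion hA) (fun ν hν => ?_) ψ hψ μ hμ
    obtain ⟨i, hi⟩ := Set.mem_iUnion.1 hν
    have := M.isProbabilityMeasure_of_mem_prep _ (b.orthonormal.1 i) ν hi
    exact (mem_ae_iff_prob_eq_one (.iUnion hA)).1
      ((hAb i ν hi).mono fun x hx => Set.mem_iUnion.2 ⟨i, hx⟩)
  refine measure_mono_null (fun x hx => ?_) (measure_union_null (measure_iUnion_null hF)
    ((prob_compl_eq_zero_iff (.iUnion hA)).2 hΩ))
  by_cases hxA : x ∈ ⋃ i, A i
  · obtain ⟨i, hi⟩ := Set.mem_iUnion.1 hxA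
    exact Or.inl (Set.mem_iUnion.2 ⟨i, hi, hx⟩)
  · exact Or.inr hxA

lemma exists_overlaps (hM : M.IsESMR b) (hψ : ‖ψ‖ = 1) (hμ : μ ∈ M.prep ψ) :
    ∃ i, Overlaps μ (M.prep (b i)) := by
  have := M.isProbabilityMeasure_of_mem_prep ψ hψ μ hμ
  by_contra! h
  simp only [Overlaps, not_forall, not_not] at h
  choose A hA hAb hμA using h
  simpa using hM.measure_eq_zero hψ hμ hA hAb (F := Set.univ)
    fun i => by rw [Set.inter_univ, hμA]

lemma not_overlaps (hM : M.IsESMR b) (hψ : ‖ψ‖ = 1) (hμ : μ ∈ M.prep ψ)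
    {D : Set (Measure Λ)} (hD : ∀ i, Separates μ (M.prep (b i)) D) : ¬ Overlaps μ D := by
  choose A T hA hT hAb hTD hμAT using hD
  exact fun h => h _ (.iInter hT) (isFullFor_iInter hTD) <| hM.measure_eq_zero hψ hμ hA hAb
    fun i => measure_mono_null (Set.inter_subset_inter_right _ (Set.iInter_subset T i)) (hμAT i)

end IsESMR

lemma separates_prep_basis {s : Finset ι} (hs : 1 < s.card) (hψ : ‖ψ‖ = 1)
    (hsψ : ∀ i ∈ s, ⟪b i, ψ⟫_ℂ = 2⁻¹) (hsψ' : ∀ i ∉ s, ⟪b i, ψ⟫_ℂ = 0)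
    (hμ : μ ∈ M.prep ψ) {i₀ : ι} (hi₀ : i₀ ∈ s) (i : ι) :
    Separates μ (M.prep (b i)) (M.prep (ψ - b i₀)) := by
  by_cases hi : i ∉ s
  · obtain ⟨A, hA, hAb, hμA⟩ :=
      M.exists_isFullFor_measure_eq_zero_of_inner_eq_zero hψ hμ (hsψ' i hi)
    exact separates_of_measure_eq_zero hA hAb hμA _
  obtain ⟨j, hj, hji₀, hij⟩ : ∃ j ∈ s, j ≠ i₀ ∧ (i = i₀ ∨ i = j) := by
    by_cases h : i = i₀
    · obtain ⟨j, hj, hne⟩ := Finset.exists_mem_ne hs i₀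
      exact ⟨j, hj, hne, .inl h⟩
    · exact ⟨i, not_not.1 hi, h, .inr rfl⟩
  have := b.toBasis.finiteDimensional_of_finite
  have hχ : ‖ψ - b i₀‖ = 1 := by
    rw [← reflection_span_singleton_eq_sub hψ (hsψ i₀ hi₀), LinearIsometryEquiv.norm_map,
      b.orthonormal.1]
  obtain ⟨B, hBi₀, hBj, hBχ, hBψ⟩ := exists_orthonormalBasis_antidistinguishing
    (Module.finrank_eq_card_basis b.toBasis) hji₀.symm (b.orthonormal.1 i₀) (b.orthonormal.1 j)
    hψ (b.orthonormal.2 hji₀.symm) (hsψ i₀ hi₀) (hsψ j hj)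
  refine M.separates_of_antidistinguishing hji₀.symm (b.orthonormal.1 i) hχ hψ hμ ?_ hBχ hBψ
  rcases hij with rfl | rfl
  exacts [hBi₀, hBj]

theorem not_isESMR (M : OntologicalModel ι H Λ) (b : OrthonormalBasis ι ℂ H)
    (hι : 4 ≤ Fintype.card ι) : ¬ M.IsESMR b := by
  intro hM
  obtain ⟨s, -, hs⟩ := Finset.exists_subset_card_eq (s := Finset.univ) hι
  obtain ⟨ψ, hψ, hsψ, hsψ'⟩ := exists_uniform_superposition b hs
  obtain ⟨μ₀, hμ₀⟩ := M.prep_nonempty ψ hψ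
  obtain ⟨i₀, hov⟩ := hM.exists_overlaps hψ hμ₀
  have hi₀ : i₀ ∈ s := by
    by_contra hi₀
    obtain ⟨A, hA, hAb, hμA⟩ :=
      M.exists_isFullFor_measure_eq_zero_of_inner_eq_zero hψ hμ₀ (hsψ' i₀ hi₀)
    exact hov A hA hAb hμA
  set R := (ℂ ∙ ψ).reflection
  obtain ⟨γ, hγ⟩ := M.trans_nonempty R
  have := M.isMarkovKernel_of_mem_trans R γ hγ
  have hμ₁ : μ₀.bind γ ∈ M.prep ψ := by
    simpa [R, Submodule.reflection_mem_subspace_eq_self (Submodule.mem_span_singleton_self ψ)]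
      using M.bind_mem_prep ψ hψ μ₀ hμ₀ R γ hγ
  have hRb : R (b i₀) = ψ - b i₀ := reflection_span_singleton_eq_sub hψ (hsψ i₀ hi₀)
  have hov₁ : Overlaps (μ₀.bind γ) (M.prep (ψ - b i₀)) :=
    hov.bind fun ν hν => hRb ▸ M.bind_mem_prep _ (b.orthonormal.1 i₀) ν hν R γ hγ
  exact hM.not_overlaps hψ hμ₁ (separates_prep_basis (by omega) hψ hsψ hsψ' hμ₁ hi₀) hov₁

end OntologicalModel

theorem no_esmr_emmr_model (d : ℕ) (hd : 4 ≤ d) :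
    ¬ ∃ (Λ : Type) (_ : MeasurableSpace Λ)
        (Δ : EuclideanSpace ℂ (Fin d) → Set (Measure Λ))
        (Γ : (EuclideanSpace ℂ (Fin d) ≃ₗᵢ[ℂ] EuclideanSpace ℂ (Fin d)) →
          Set (Kernel Λ Λ))
        (Ξ : OrthonormalBasis (Fin d) ℂ (EuclideanSpace ℂ (Fin d)) →
          Set (Fin d → Λ → ℝ)),
      -- (a)-(d): nonemptiness and well-formedness of the model's data
      (∀ ψ : EuclideanSpace ℂ (Fin d), ‖ψ‖ = 1 →
        (Δ ψ).Nonempty ∧ ∀ μ ∈ Δ ψ, IsProbabilityMeasure μ) ∧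
      (∀ U : EuclideanSpace ℂ (Fin d) ≃ₗᵢ[ℂ] EuclideanSpace ℂ (Fin d),
        (Γ U).Nonempty ∧ ∀ γ ∈ Γ U, IsMarkovKernel γ) ∧
      (∀ e : OrthonormalBasis (Fin d) ℂ (EuclideanSpace ℂ (Fin d)),
        (Ξ e).Nonempty ∧ ∀ P ∈ Ξ e,
          (∀ i : Fin d, Measurable (P i)) ∧
          (∀ x : Λ, (∀ i : Fin d, 0 ≤ P i x) ∧ ∑ i : Fin d, P i x = 1)) ∧
      -- Born rule
      (∀ ψ : EuclideanSpace ℂ (Fin d), ‖ψ‖ = 1 → ∀ μ ∈ Δ ψ,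
        ∀ e : OrthonormalBasis (Fin d) ℂ (EuclideanSpace ℂ (Fin d)),
          ∀ P ∈ Ξ e, ∀ i : Fin d, ∫ x, P i x ∂μ = ‖⟪e i, ψ⟫_ℂ‖ ^ 2) ∧
      -- closure under transformations
      (∀ ψ : EuclideanSpace ℂ (Fin d), ‖ψ‖ = 1 → ∀ μ ∈ Δ ψ,
        ∀ U : EuclideanSpace ℂ (Fin d) ≃ₗᵢ[ℂ] EuclideanSpace ℂ (Fin d),
          ∀ γ ∈ Γ U, μ.bind γ ∈ Δ (U ψ)) ∧
      -- ESMR/EMMR support condition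
      (∀ Ω : Set Λ, MeasurableSet Ω →
        (∀ ν ∈ ⋃ i : Fin d, Δ (EuclideanSpace.single i (1 : ℂ)), ν Ω = 1) →
        ∀ ψ : EuclideanSpace ℂ (Fin d), ‖ψ‖ = 1 → ∀ μ ∈ Δ ψ, μ Ω = 1) := by
  rintro ⟨Λ, _, Δ, Γ, Ξ, hΔ, hΓ, hΞ, hborn, hbind, hESMR⟩
  let M : OntologicalModel (Fin d) (EuclideanSpace ℂ (Fin d)) Λ :=
    { prep := Δ
      trans := Γ
      resp := Ξ
      prep_nonempty := fun ψ hψ => (hΔ ψ hψ).1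
      isProbabilityMeasure_of_mem_prep := fun ψ hψ => (hΔ ψ hψ).2
      trans_nonempty := fun U => (hΓ U).1
      isMarkovKernel_of_mem_trans := fun U => (hΓ U).2
      resp_nonempty := fun e => (hΞ e).1
      isResponseFamily_of_mem_resp := fun e P hP =>
        ⟨((hΞ e).2 P hP).1, fun i x => (((hΞ e).2 P hP).2 x).1 i,
          fun x => (((hΞ e).2 P hP).2 x).2⟩
      born := hborn
      bind_mem_prep := hbind }
  exact M.not_isESMR (EuclideanSpace.basisFun (Fin d) ℂ) (by simpa using hd)
    (by simpa [OntologicalModel.IsESMR] using hESMR)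
end
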